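/- Let L ∈ ℝ^{n×n} be essentially nonnegative and reducible, and p ∈ ℝ₊ⁿ. Then [[L, p],[𝟙ᵀ, 1]] is irreducible if and only if [[exp(Lt), p],[𝟙ᵀ, 1]] is irreducible for every t > 0. -/

import Mathlib

def Irred {m : ℕ} (M : Matrix (Fin m) (Fin m) ℝ) : Prop :=
  ∀ r s : Fin m, r ≠ s → ∃ (k : ℕ) (i : Fin (k+1) → Fin m),
    Function.Injective i ∧ i 0 = r ∧ i (Fin.last k) = s ∧
    ∀ j : Fin k, 0 < M (i j.castSucc) (i j.succ)

/-- The augmented matrix [[A, p],[𝟙ᵀ, 1]]. -/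
def aug {n : ℕ} (A : Matrix (Fin n) (Fin n) ℝ) (p : Fin n → ℝ) :
    Matrix (Fin (n+1)) (Fin (n+1)) ℝ := fun i j =>
  if hi : (i : ℕ) < n then
    (if hj : (j : ℕ) < n then A ⟨i, hi⟩ ⟨j, hj⟩ else p ⟨i, hi⟩)
  else 1

/-! For an essentially nonnegative `M`, the `(i, j)` entry of `exp M` is positive exactly when
`j` is reachable from `i` in the directed graph of the positive off-diagonal entries of `M`:
adding a multiple of the identity makes `M` nonnegative while only rescaling `exp M`, and the
exponential series of a nonnegative matrix has a positive `(i, j)` entry iff some power does.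
So for `t > 0` the matrices `exp (t • L)` and `L` have the same reachability relation, the augmented
matrices share the row and column of the extra vertex, and irreducibility is strong connectivity
of this graph. -/

open Relation

theorem List.exists_nodup_isChain_cons_of_reflTransGen {α : Type*} {r : α → α → Prop}
    {a b : α} (h : ReflTransGen r a b) :
    ∃ l, IsChain r (a :: l) ∧ (a :: l).getLast (cons_ne_nil a l) = b ∧ (a :: l).Nodup := by
  induction h using ReflTransGen.head_induction_on with
  | refl => exact ⟨[], .singleton _, rfl, nodup_singleton _⟩
  | @head a c hac _ ih =>
    obtain ⟨l, hchain, hlast, hnodup⟩ := ih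
    by_cases ha : a ∈ c :: l
    · -- cut the path at its later visit to `a`
      obtain ⟨l₁, l₂, hsplit⟩ := append_of_mem ha
      have hsuffix : a :: l₂ <:+ c :: l := ⟨l₁, hsplit.symm⟩
      exact ⟨l₂, hchain.suffix hsuffix, (hsuffix.getLast (cons_ne_nil a l₂)).trans hlast,
        hnodup.sublist hsuffix.sublist⟩
    · exact ⟨c :: l, hchain.cons_cons hac, hlast, nodup_cons.2 ⟨ha, hnodup⟩⟩

section Graph

variable {m : ℕ}

def offDiagPos (M : Matrix (Fin m) (Fin m) ℝ) (a b : Fin m) : Prop :=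
  a ≠ b ∧ 0 < M a b

theorem irred_iff_reflTransGen (M : Matrix (Fin m) (Fin m) ℝ) :
    Irred M ↔ ∀ r s, ReflTransGen (offDiagPos M) r s := by
  constructor
  · intro h r s
    rcases eq_or_ne r s with rfl | hrs
    · exact .refl
    obtain ⟨k, i, hinj, rfl, rfl, hpos⟩ := h r s hrs
    suffices ∀ j, ReflTransGen (offDiagPos M) (i 0) (i j) from this (Fin.last k)
    intro j
    induction j using Fin.induction with
    | zero => exact .refl
    | succ j ih => exact ih.tail ⟨hinj.ne (Fin.castSucc_lt_succ (i := j)).ne, hpos j⟩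
  · intro h r s _
    obtain ⟨l, hchain, hlast, hnodup⟩ := List.exists_nodup_isChain_cons_of_reflTransGen (h r s)
    have hlen : (r :: l).length = l.length + 1 := rfl
    refine ⟨l.length, fun j => (r :: l).get (Fin.cast hlen.symm j),
      (List.nodup_iff_injective_get.1 hnodup).comp (Fin.cast_injective _), rfl, ?_, ?_⟩
    · rw [← hlast, List.getLast_eq_getElem]
      rfl
    · intro j
      exact (List.isChain_iff_getElem.1 hchain j (by simp)).2

theorem irred_of_le_reflTransGen {A B : Matrix (Fin m) (Fin m) ℝ}
    (hAB : offDiagPos A ≤ ReflTransGen (offDiagPos B)) (hA : Irred A) : Irred B := by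
  rw [irred_iff_reflTransGen] at hA ⊢
  exact fun r s => reflTransGen_closed hAB r s (hA r s)

theorem reflTransGen_pos_eq (M : Matrix (Fin m) (Fin m) ℝ) :
    ReflTransGen (fun a b => 0 < M a b) = ReflTransGen (offDiagPos M) := by
  refine le_antisymm ?_ (ReflTransGen.mono fun a b h => h.2)
  rw [← reflTransGen_reflGen (r := offDiagPos M)]
  refine ReflTransGen.mono fun a b hab => ?_
  rcases eq_or_ne a b with rfl | hne
  · exact .refl
  · exact .single ⟨hne, hab⟩

theorem offDiagPos_smul {t : ℝ} (ht : 0 < t) (M : Matrix (Fin m) (Fin m) ℝ) :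
    offDiagPos (t • M) = offDiagPos M := by
  ext a b
  simp [offDiagPos, smul_eq_mul, mul_pos_iff_of_pos_left ht]

theorem offDiagPos_add_diagonal (M : Matrix (Fin m) (Fin m) ℝ) (d : Fin m → ℝ) :
    offDiagPos (M + Matrix.diagonal d) = offDiagPos M := by
  ext a b
  simp +contextual [offDiagPos, Matrix.diagonal_apply_ne]

end Graph

section Exp

variable {m : ℕ}

theorem exists_pow_apply_pos_iff {N : Matrix (Fin m) (Fin m) ℝ} (hN : ∀ i j, 0 ≤ N i j)
    (i j : Fin m) : (∃ k, 0 < (N ^ k) i j) ↔ ReflTransGen (fun a b => 0 < N a b) i j := by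
  constructor
  · rintro ⟨k, hk⟩
    induction k generalizing i with
    | zero =>
      rcases eq_or_ne i j with rfl | hij
      · exact .refl
      · simp [Matrix.one_apply_ne hij] at hk
    | succ k ih =>
      rw [pow_succ', Matrix.mul_apply, Finset.sum_pos_iff_of_nonneg
        fun a _ => mul_nonneg (hN i a) (Matrix.pow_apply_nonneg hN k a j)] at hk
      obtain ⟨a, -, hia⟩ := hk
      exact .head (pos_of_mul_pos_left hia (Matrix.pow_apply_nonneg hN k a j))
        (ih a (pos_of_mul_pos_right hia (hN i a)))
  · intro h
    induction h with
    | refl => exact ⟨0, by simp⟩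
    | @tail b c _ hbc ih =>
      obtain ⟨k, hk⟩ := ih
      refine ⟨k + 1, ?_⟩
      rw [pow_succ, Matrix.mul_apply]
      exact Finset.sum_pos' (fun a _ => mul_nonneg (Matrix.pow_apply_nonneg hN k i a) (hN a c))
        ⟨b, Finset.mem_univ b, mul_pos hk hbc⟩

theorem hasSum_exp_apply (M : Matrix (Fin m) (Fin m) ℝ) (i j : Fin m) :
    HasSum (fun k => (k.factorial : ℝ)⁻¹ * (M ^ k) i j) (NormedSpace.exp M i j) := by
  let := Matrix.linftyOpNormedRing (n := Fin m) (α := ℝ)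
  let := Matrix.linftyOpNormedAlgebra (n := Fin m) (R := ℝ) (α := ℝ)
  exact Pi.hasSum.1 (Pi.hasSum.1 (NormedSpace.exp_series_hasSum_exp' (𝕂 := ℝ) M) i) j

theorem exp_apply_pos_iff_of_nonneg {N : Matrix (Fin m) (Fin m) ℝ} (hN : ∀ i j, 0 ≤ N i j)
    (i j : Fin m) : 0 < NormedSpace.exp N i j ↔ ∃ k, 0 < (N ^ k) i j := by
  have hterm : ∀ k : ℕ, 0 ≤ (k.factorial : ℝ)⁻¹ * (N ^ k) i j :=
    fun k => mul_nonneg (by positivity) (Matrix.pow_apply_nonneg hN k i j)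
  have hsum := hasSum_exp_apply N i j
  constructor
  · intro hpos
    by_contra! hk
    have hzero : (fun k => (k.factorial : ℝ)⁻¹ * (N ^ k) i j) = 0 :=
      funext fun k => by simp [le_antisymm (hk k) (Matrix.pow_apply_nonneg hN k i j)]
    rw [hzero] at hsum
    exact hpos.ne' (hsum.unique hasSum_zero)
  · rintro ⟨k, hk⟩
    exact (mul_pos (by positivity) hk).trans_le (le_hasSum hsum k fun k _ => hterm k)

theorem exp_add_diagonal_const_apply (M : Matrix (Fin m) (Fin m) ℝ) (c : ℝ) (i j : Fin m) :
    NormedSpace.exp (M + Matrix.diagonal fun _ => c : Matrix (Fin m) (Fin m) ℝ) i j =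
      NormedSpace.exp M i j * Real.exp c := by
  have hcomm : Commute M (Matrix.diagonal fun _ => c) := by
    simpa [← Matrix.smul_one_eq_diagonal] using (Commute.one_right M).smul_right c
  rw [Matrix.exp_add_of_commute _ _ hcomm, Matrix.exp_diagonal, Matrix.mul_diagonal, Pi.exp_def,
    Real.exp_eq_exp_ℝ]

end Exp

theorem exp_apply_pos_iff {m : ℕ} {M : Matrix (Fin m) (Fin m) ℝ}
    (hM : ∀ i j, i ≠ j → 0 ≤ M i j) (i j : Fin m) :
    0 < NormedSpace.exp M i j ↔ ReflTransGen (offDiagPos M) i j := by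
  -- shifting `M` by `c • 1` makes it nonnegative and only rescales `exp M` by `Real.exp c`
  obtain ⟨c, hc⟩ := Finite.exists_le fun a => -M a a
  set N : Matrix (Fin m) (Fin m) ℝ := M + Matrix.diagonal fun _ => c
  have hN : ∀ a b, 0 ≤ N a b := by
    intro a b
    rcases eq_or_ne a b with rfl | hab
    · simpa [N, add_comm] using neg_le_iff_add_nonneg.1 (hc a)
    · simpa [N, Matrix.diagonal_apply_ne _ hab] using hM a b hab
  rw [← mul_pos_iff_of_pos_right (Real.exp_pos c), ← exp_add_diagonal_const_apply,
    exp_apply_pos_iff_of_nonneg hN, exists_pow_apply_pos_iff hN, reflTransGen_pos_eq,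
    offDiagPos_add_diagonal]

theorem reflTransGen_offDiagPos_exp {m : ℕ} {M : Matrix (Fin m) (Fin m) ℝ}
    (hM : ∀ i j, i ≠ j → 0 ≤ M i j) :
    ReflTransGen (offDiagPos (NormedSpace.exp M)) = ReflTransGen (offDiagPos M) :=
  le_antisymm (reflTransGen_closed fun a b h => (exp_apply_pos_iff hM a b).1 h.2)
    (reflTransGen_closed fun a b h => .single ⟨h.1, (exp_apply_pos_iff hM a b).2 (.single h)⟩)

section Aug

variable {n : ℕ}

@[simp]
theorem aug_castSucc_castSucc (A : Matrix (Fin n) (Fin n) ℝ) (p : Fin n → ℝ) (a b : Fin n) :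
    aug A p a.castSucc b.castSucc = A a b := by
  simp [aug]

@[simp]
theorem aug_castSucc_last (A : Matrix (Fin n) (Fin n) ℝ) (p : Fin n → ℝ) (a : Fin n) :
    aug A p a.castSucc (Fin.last n) = p a := by
  simp [aug]

@[simp]
theorem aug_last (A : Matrix (Fin n) (Fin n) ℝ) (p : Fin n → ℝ) (b : Fin (n + 1)) :
    aug A p (Fin.last n) b = 1 := by
  simp [aug]

theorem offDiagPos_aug_le {A B : Matrix (Fin n) (Fin n) ℝ}
    (hAB : offDiagPos A ≤ ReflTransGen (offDiagPos B)) (p : Fin n → ℝ) :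
    offDiagPos (aug A p) ≤ ReflTransGen (offDiagPos (aug B p)) := by
  intro x y ⟨hne, hpos⟩
  induction x using Fin.lastCases with
  | last => exact .single ⟨hne, by simp⟩
  | cast a =>
    induction y using Fin.lastCases with
    | last => exact .single ⟨hne, by simpa using hpos⟩
    | cast b =>
      refine ReflTransGen.lift Fin.castSucc (fun x y h => ?_) _ _
        (hAB a b ⟨fun h => hne (h ▸ rfl), by simpa using hpos⟩)
      exact ⟨(Fin.castSucc_injective n).ne h.1, by simpa using h.2⟩

theorem irred_aug_iff_of_reflTransGen_eq {A B : Matrix (Fin n) (Fin n) ℝ}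
    (hAB : ReflTransGen (offDiagPos A) = ReflTransGen (offDiagPos B)) (p : Fin n → ℝ) :
    Irred (aug A p) ↔ Irred (aug B p) :=
  ⟨irred_of_le_reflTransGen (offDiagPos_aug_le (fun _ _ h => hAB ▸ .single h) p),
    irred_of_le_reflTransGen (offDiagPos_aug_le (fun _ _ h => hAB.symm ▸ .single h) p)⟩

end Aug

theorem stmt11_general {n : ℕ} (L : Matrix (Fin n) (Fin n) ℝ)
    (hL : ∀ i j, i ≠ j → 0 ≤ L i j)
    (p : Fin n → ℝ) :
    Irred (aug L p) ↔
      ∀ t : ℝ, 0 < t → Irred (aug (NormedSpace.exp (t • L)) p) := by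
  have hexp : ∀ t : ℝ, 0 < t →
      ReflTransGen (offDiagPos (NormedSpace.exp (t • L))) = ReflTransGen (offDiagPos L) :=
    fun t ht => by
      rw [reflTransGen_offDiagPos_exp (M := t • L) fun i j hij => mul_nonneg ht.le (hL i j hij),
        offDiagPos_smul ht]
  exact ⟨fun h t ht => (irred_aug_iff_of_reflTransGen_eq (hexp t ht) p).2 h,
    fun h => (irred_aug_iff_of_reflTransGen_eq (hexp 1 one_pos) p).1 (h 1 one_pos)⟩

theorem stmt11 {n : ℕ} (L : Matrix (Fin n) (Fin n) ℝ)
    (hL : ∀ i j, i ≠ j → 0 ≤ L i j) (hred : ¬ Irred L)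
    (p : Fin n → ℝ) (hp : ∀ i, 0 ≤ p i) :
    Irred (aug L p) ↔
      ∀ t : ℝ, 0 < t → Irred (aug (NormedSpace.exp (t • L)) p) :=
  stmt11_general L hL p
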